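/- arXiv:1702.04903 — 7 statements merged into one kernel-verified Lean document; each statement's English description precedes it below -/
import Mathlib

section
/- Let B be an algebra with a nondegenerate product (for all nonzero b there exist b' with bb' ≠ 0 and b'' with b''b ≠ 0), and let y be a multiplier of B (a pair of left/right multiplication-compatible maps) such that yB = B and By = B. Then y is invertible in the multiplier algebra M(B). -/
/-!
A multiplier `(L, R)` with `L` and `R` surjective is automatically bijective: if `L b = 0` then
`R a * b = a * L b = 0` for every `a`, and the `R a` exhaust `B`, so nondegeneracy gives `b = 0`
(symmetrically for `R`). The set-theoretic inverses are then linear, inherit the multiplier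
identities, and form the inverse multiplier.
-/

section Multiplier

variable {𝕜 B : Type*} [Semiring 𝕜] [NonUnitalNonAssocRing B] [Module 𝕜 B]

theorem injective_of_mul_apply_eq_of_surjective
    (hnd : ∀ b : B, (∀ b' : B, b' * b = 0) → b = 0) {L R : B →ₗ[𝕜] B}
    (hLR : ∀ a b : B, a * L b = R a * b) (hR : Function.Surjective R) :
    Function.Injective L := by
  refine (injective_iff_map_eq_zero L).2 fun b hb => hnd b fun b' => ?_
  obtain ⟨a, rfl⟩ := hR b'
  rw [← hLR, hb, mul_zero]

theorem injective_of_apply_mul_eq_of_surjective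
    (hnd : ∀ b : B, (∀ b' : B, b * b' = 0) → b = 0) {L R : B →ₗ[𝕜] B}
    (hLR : ∀ a b : B, a * L b = R a * b) (hL : Function.Surjective L) :
    Function.Injective R := by
  refine (injective_iff_map_eq_zero R).2 fun b hb => hnd b fun b' => ?_
  obtain ⟨a, rfl⟩ := hL b'
  rw [hLR, hb, zero_mul]

namespace LinearEquiv

theorem symm_map_mul_right (e : B ≃ₗ[𝕜] B) (he : ∀ a b : B, e (a * b) = e a * b)
    (a b : B) : e.symm (a * b) = e.symm a * b :=
  e.injective <| by rw [he, apply_symm_apply, apply_symm_apply]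

theorem symm_map_mul_left (e : B ≃ₗ[𝕜] B) (he : ∀ a b : B, e (a * b) = a * e b)
    (a b : B) : e.symm (a * b) = a * e.symm b :=
  e.injective <| by rw [he, apply_symm_apply, apply_symm_apply]

theorem mul_symm_apply_eq_symm_apply_mul (eL eR : B ≃ₗ[𝕜] B)
    (h : ∀ a b : B, a * eL b = eR a * b) (a b : B) : a * eL.symm b = eR.symm a * b := by
  simpa using (h (eR.symm a) (eL.symm b)).symm

end LinearEquiv

end Multiplier

theorem multiplier_invertible_of_surjective_general
    {B : Type*} [NonUnitalRing B] [Module ℂ B]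
    (hnd_left : ∀ b : B, (∀ b' : B, b * b' = 0) → b = 0)
    (hnd_right : ∀ b : B, (∀ b' : B, b' * b = 0) → b = 0)
    (L R : B →ₗ[ℂ] B)
    (hL : ∀ a b : B, L (a * b) = L a * b)
    (hR : ∀ a b : B, R (a * b) = a * R b)
    (hLR : ∀ a b : B, a * L b = R a * b)
    (hLsurj : Function.Surjective L)   -- yB = B
    (hRsurj : Function.Surjective R)   -- By = B
    :
    ∃ L' R' : B →ₗ[ℂ] B,
      (∀ a b : B, L' (a * b) = L' a * b) ∧
      (∀ a b : B, R' (a * b) = a * R' b) ∧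
      (∀ a b : B, a * L' b = R' a * b) ∧
      L ∘ₗ L' = LinearMap.id ∧ L' ∘ₗ L = LinearMap.id ∧
      R ∘ₗ R' = LinearMap.id ∧ R' ∘ₗ R = LinearMap.id := by
  let eL := LinearEquiv.ofBijective L
    ⟨injective_of_mul_apply_eq_of_surjective hnd_right hLR hRsurj, hLsurj⟩
  let eR := LinearEquiv.ofBijective R
    ⟨injective_of_apply_mul_eq_of_surjective hnd_left hLR hLsurj, hRsurj⟩
  exact ⟨eL.symm, eR.symm, eL.symm_map_mul_right hL, eR.symm_map_mul_left hR,
    LinearEquiv.mul_symm_apply_eq_symm_apply_mul eL eR hLR,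
    eL.comp_symm, eL.symm_comp, eR.comp_symm, eR.symm_comp⟩

/-- If `B` is a nondegenerate (possibly non-unital) ℂ-algebra and
`y = (L, R)` is a multiplier of `B` with `yB = B` and `By = B`, then `y` is
invertible in the multiplier algebra `M(B)`. -/
theorem multiplier_invertible_of_surjective
    {B : Type*} [NonUnitalRing B] [Module ℂ B]
    [SMulCommClass ℂ B B] [IsScalarTower ℂ B B]
    (hnd_left : ∀ b : B, (∀ b' : B, b * b' = 0) → b = 0)
    (hnd_right : ∀ b : B, (∀ b' : B, b' * b = 0) → b = 0)
    (L R : B →ₗ[ℂ] B)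
    (hL : ∀ a b : B, L (a * b) = L a * b)
    (hR : ∀ a b : B, R (a * b) = a * R b)
    (hLR : ∀ a b : B, a * L b = R a * b)
    (hLsurj : Function.Surjective L)   -- yB = B
    (hRsurj : Function.Surjective R)   -- By = B
    :
    ∃ L' R' : B →ₗ[ℂ] B,
      (∀ a b : B, L' (a * b) = L' a * b) ∧
      (∀ a b : B, R' (a * b) = a * R' b) ∧
      (∀ a b : B, a * L' b = R' a * b) ∧
      L ∘ₗ L' = LinearMap.id ∧ L' ∘ₗ L = LinearMap.id ∧
      R ∘ₗ R' = LinearMap.id ∧ R' ∘ₗ R = LinearMap.id :=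
  multiplier_invertible_of_surjective_general hnd_left hnd_right L R hL hR hLR hLsurj hRsurj
end

section
/- Let B and C be finite-dimensional ℂ-algebras, E ∈ B ⊗ C an idempotent, and S_B : B → C, S_C : C → B algebra anti-isomorphisms satisfying E(b ⊗ 1) = E(1 ⊗ S_B(b)) and (1 ⊗ c)E = (S_C(c) ⊗ 1)E for all b ∈ B, c ∈ C. Suppose (S_B ⊗ S_C)(E) = ζ(E), where ζ : B ⊗ C → C ⊗ B is the flip. Then (S_C ∘ S_B ⊗ S_B ∘ S_C)(E) = E. -/
open TensorProduct

theorem TensorProduct.map_comp_map_eq_self_of_map_eq_comm {R M N : Type*} [CommSemiring R]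
    [AddCommMonoid M] [AddCommMonoid N] [Module R M] [Module R N]
    (f : M →ₗ[R] N) (g : N →ₗ[R] M) {x : M ⊗[R] N}
    (hx : TensorProduct.map f g x = TensorProduct.comm R M N x) :
    TensorProduct.map (g ∘ₗ f) (f ∘ₗ g) x = x :=
  calc TensorProduct.map (g ∘ₗ f) (f ∘ₗ g) x
      = TensorProduct.map g f (TensorProduct.comm R M N x) := by
        rw [TensorProduct.map_comp, LinearMap.comp_apply, hx]
    _ = TensorProduct.comm R N M (TensorProduct.comm R M N x) := by
        rw [TensorProduct.map_comm, hx]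
    _ = x := TensorProduct.comm_comm R N M x

theorem regular_sep_idempotent_square_general
    {B C : Type*} [Ring B] [Algebra ℂ B] [Ring C] [Algebra ℂ C]
    (SB : B →ₗ[ℂ] C) (SC : C →ₗ[ℂ] B)
    (E : B ⊗[ℂ] C)
    (hreg : TensorProduct.map SB SC E = TensorProduct.comm ℂ B C E) :
    TensorProduct.map (SC ∘ₗ SB) (SB ∘ₗ SC) E = E :=
  TensorProduct.map_comp_map_eq_self_of_map_eq_comm SB SC hreg

/-- For a regular separability idempotent `E` with `(S_B ⊗ S_C)(E) = ζ(E)`,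
we have `(S_C∘S_B ⊗ S_B∘S_C)(E) = E`. -/
theorem regular_sep_idempotent_square
    {B C : Type*} [Ring B] [Algebra ℂ B] [Ring C] [Algebra ℂ C]
    [FiniteDimensional ℂ B] [FiniteDimensional ℂ C]
    (SB : B →ₗ[ℂ] C) (SC : C →ₗ[ℂ] B)
    (hSBanti : ∀ a b : B, SB (a * b) = SB b * SB a)
    (hSCanti : ∀ a b : C, SC (a * b) = SC b * SC a)
    (hSBbij : Function.Bijective SB) (hSCbij : Function.Bijective SC)
    (E : B ⊗[ℂ] C)
    (hEidem : E * E = E)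
    (hE1 : ∀ b : B, E * (b ⊗ₜ[ℂ] (1 : C)) = E * ((1 : B) ⊗ₜ[ℂ] SB b))
    (hE2 : ∀ c : C, ((1 : B) ⊗ₜ[ℂ] c) * E = (SC c ⊗ₜ[ℂ] (1 : C)) * E)
    (hreg : TensorProduct.map SB SC E = TensorProduct.comm ℂ B C E) :
    TensorProduct.map (SC ∘ₗ SB) (SB ∘ₗ SC) E = E :=
  regular_sep_idempotent_square_general SB SC E hreg
end

section
/- Let B, C be finite-dimensional ℂ-algebras with an idempotent E ∈ B ⊗ C, anti-isomorphisms S_B : B → C and S_C : C → B satisfying E(b ⊗ 1) = E(1 ⊗ S_B(b)) and (1 ⊗ c)E = (S_C(c) ⊗ 1)E, and linear functionals φ_B on B and φ_C on C satisfying (φ_B ⊗ id)(E) = 1 and (id ⊗ φ_C)(E) = 1. Then for any linear functional g on B, the element y = (id ⊗ (g ∘ S_C))(E) ∈ B satisfies g(b) = φ_B(by) for all b ∈ B. -/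
open TensorProduct

/-- `(f ⊗ id)(E)` for a functional `f` on `B`. -/
noncomputable def lTens {B C : Type*} [AddCommGroup B] [Module ℂ B]
    [AddCommGroup C] [Module ℂ C] (f : B →ₗ[ℂ] ℂ) :
    B ⊗[ℂ] C →ₗ[ℂ] C :=
  (TensorProduct.lid ℂ C).toLinearMap ∘ₗ TensorProduct.map f LinearMap.id

/-- `(id ⊗ g)(E)` for a functional `g` on `C`. -/
noncomputable def rTens {B C : Type*} [AddCommGroup B] [Module ℂ B]
    [AddCommGroup C] [Module ℂ C] (g : C →ₗ[ℂ] ℂ) :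
    B ⊗[ℂ] C →ₗ[ℂ] B :=
  (TensorProduct.rid ℂ B).toLinearMap ∘ₗ TensorProduct.map LinearMap.id g

/-! Writing `b = S_C c`, the relation `(1 ⊗ c) E = (S_C c ⊗ 1) E` turns `φ_B (b y)` into
`(φ_B ⊗ (g ∘ S_C ∘ (c * ·)))(E)`. Slicing `E` with `φ_B` first instead gives
`g (S_C (c * (φ_B ⊗ id)(E))) = g (S_C c) = g b`. -/

section Slices

variable {B C : Type*}

theorem apply_rTens_eq_apply_lTens [AddCommGroup B] [Module ℂ B] [AddCommGroup C] [Module ℂ C]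
    (f : B →ₗ[ℂ] ℂ) (k : C →ₗ[ℂ] ℂ) (x : B ⊗[ℂ] C) :
    f (rTens k x) = k (lTens f x) := by
  induction x using TensorProduct.induction_on with
  | zero => simp
  | tmul b c => simp [rTens, lTens, mul_comm]
  | add x y hx hy => simp [hx, hy]

variable [Ring B] [Algebra ℂ B] [Ring C] [Algebra ℂ C]

theorem rTens_tmul_one_mul (k : C →ₗ[ℂ] ℂ) (b : B) (x : B ⊗[ℂ] C) :
    rTens k ((b ⊗ₜ[ℂ] (1 : C)) * x) = b * rTens k x := by
  induction x using TensorProduct.induction_on with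
  | zero => simp
  | tmul a d => simp [rTens, Algebra.TensorProduct.tmul_mul_tmul]
  | add x y hx hy => simp [mul_add, hx, hy]

theorem rTens_one_tmul_mul (k : C →ₗ[ℂ] ℂ) (c : C) (x : B ⊗[ℂ] C) :
    rTens k (((1 : B) ⊗ₜ[ℂ] c) * x) = rTens (k ∘ₗ LinearMap.mulLeft ℂ c) x := by
  induction x using TensorProduct.induction_on with
  | zero => simp
  | tmul a d => simp [rTens, Algebra.TensorProduct.tmul_mul_tmul]
  | add x y hx hy => simp [mul_add, hx, hy]

end Slices

theorem radon_nikodym_right_general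
    {B C : Type*} [Ring B] [Algebra ℂ B] [Ring C] [Algebra ℂ C]
    (SC : C →ₗ[ℂ] B)
    (hSCbij : Function.Bijective SC)
    (E : B ⊗[ℂ] C)
    (hE2 : ∀ c : C, ((1 : B) ⊗ₜ[ℂ] c) * E = (SC c ⊗ₜ[ℂ] (1 : C)) * E)
    (φB : B →ₗ[ℂ] ℂ)
    (hφB : lTens φB E = 1)
    (g : B →ₗ[ℂ] ℂ) :
    ∀ b : B, g b = φB (b * rTens (g ∘ₗ SC) E) := by
  intro b
  obtain ⟨c, rfl⟩ := hSCbij.surjective b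
  calc g (SC c) = (g ∘ₗ SC ∘ₗ LinearMap.mulLeft ℂ c) (lTens φB E) := by simp [hφB]
    _ = φB (rTens (g ∘ₗ SC) (((1 : B) ⊗ₜ[ℂ] c) * E)) := by
      rw [rTens_one_tmul_mul, apply_rTens_eq_apply_lTens, LinearMap.comp_assoc]
    _ = φB (SC c * rTens (g ∘ₗ SC) E) := by rw [hE2, rTens_tmul_one_mul]

/-- For any functional `g` on `B`, the element `y = (id ⊗ g∘S_C)(E)`
satisfies `g(b) = φ_B(b y)` for all `b ∈ B`. -/
theorem radon_nikodym_right
    {B C : Type*} [Ring B] [Algebra ℂ B] [Ring C] [Algebra ℂ C]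
    [FiniteDimensional ℂ B] [FiniteDimensional ℂ C]
    (SB : B →ₗ[ℂ] C) (SC : C →ₗ[ℂ] B)
    (hSBanti : ∀ a b : B, SB (a * b) = SB b * SB a)
    (hSCanti : ∀ a b : C, SC (a * b) = SC b * SC a)
    (hSBbij : Function.Bijective SB) (hSCbij : Function.Bijective SC)
    (E : B ⊗[ℂ] C)
    (hEidem : E * E = E)
    (hE1 : ∀ b : B, E * (b ⊗ₜ[ℂ] (1 : C)) = E * ((1 : B) ⊗ₜ[ℂ] SB b))
    (hE2 : ∀ c : C, ((1 : B) ⊗ₜ[ℂ] c) * E = (SC c ⊗ₜ[ℂ] (1 : C)) * E)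
    (φB : B →ₗ[ℂ] ℂ) (φC : C →ₗ[ℂ] ℂ)
    (hφB : lTens φB E = 1) (hφC : rTens φC E = 1)
    (g : B →ₗ[ℂ] ℂ) :
    ∀ b : B, g b = φB (b * rTens (g ∘ₗ SC) E) :=
  radon_nikodym_right_general SC hSCbij E hE2 φB hφB g
end

section
/- With B, C, E, S_B, S_C a regular separability idempotent (finite-dimensional setting) and F₁ = (id ⊗ S_C)(E) ∈ B ⊗ B, the map Δ_B : B → B ⊗ B defined by Δ_B(u) = F₁(1 ⊗ u) is coassociative: (Δ_B ⊗ id)∘Δ_B = (id ⊗ Δ_B)∘Δ_B. -/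
open TensorProduct

/-- The coproduct `Δ_B(u) = F₁ (1 ⊗ u)` on `B`, where `F₁ = (id ⊗ S_C)(E)`. -/
noncomputable def deltaB {B C : Type*} [Ring B] [Algebra ℂ B] [Ring C] [Algebra ℂ C]
    (SC : C →ₗ[ℂ] B) (E : B ⊗[ℂ] C) : B →ₗ[ℂ] B ⊗[ℂ] B :=
  (LinearMap.mulLeft ℂ (TensorProduct.map LinearMap.id SC E)) ∘ₗ
    (Algebra.TensorProduct.includeRight : B →ₐ[ℂ] B ⊗[ℂ] B).toLinearMap

/-! Applying `id ⊗ S_C` to `(1 ⊗ c) E = (S_C c ⊗ 1) E` turns it, since `S_C` is an anti-homomorphism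
onto `B`, into the commutation relation `(u ⊗ 1) F₁ = F₁ (1 ⊗ u)`. For any `F` with this property the
map `Δ u = F (1 ⊗ u)` is coassociative: the two sides at `u` are `F₁₂ F₂₃ (1 ⊗ 1 ⊗ u)` and
`F₂₃ F₁₃ (1 ⊗ 1 ⊗ u)`, and `F₁₂ F₂₃ = F₂₃ F₁₃` is the commutation relation read in the middle leg. -/

namespace TensorProduct

section Coproduct

variable {R A : Type*} [CommSemiring R] [Semiring A] [Algebra R A]

noncomputable def mulOneTmul (F : A ⊗[R] A) : A →ₗ[R] A ⊗[R] A :=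
  LinearMap.mulLeft R F ∘ₗ (Algebra.TensorProduct.includeRight : A →ₐ[R] A ⊗[R] A).toLinearMap

variable (F : A ⊗[R] A)

theorem mulOneTmul_apply (u : A) : mulOneTmul F u = F * (1 ⊗ₜ u) := rfl

theorem map_mulOneTmul_id (y : A ⊗[R] A) :
    map (mulOneTmul F) LinearMap.id y =
      (F ⊗ₜ 1) * Algebra.TensorProduct.map Algebra.TensorProduct.includeRight (AlgHom.id R A) y := by
  induction y using TensorProduct.induction_on with
  | zero => simp
  | tmul a b => simp [mulOneTmul_apply]
  | add x y hx hy => simp only [map_add, mul_add, hx, hy]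

theorem map_id_mulOneTmul (y : A ⊗[R] A) :
    map LinearMap.id (mulOneTmul F) y =
      (1 ⊗ₜ F) * Algebra.TensorProduct.map (AlgHom.id R A) Algebra.TensorProduct.includeRight y := by
  induction y using TensorProduct.induction_on with
  | zero => simp
  | tmul a b => simp [mulOneTmul_apply]
  | add x y hx hy => simp only [map_add, mul_add, hx, hy]

theorem assoc_map_includeRight_id (y : A ⊗[R] A) :
    Algebra.TensorProduct.assoc R R R A A A
        (Algebra.TensorProduct.map Algebra.TensorProduct.includeRight (AlgHom.id R A) y) =
      1 ⊗ₜ y := by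
  induction y using TensorProduct.induction_on with
  | zero => simp
  | tmul a b => simp
  | add x y hx hy => simp only [map_add, tmul_add, hx, hy]

variable {F}

/-- In leg notation, `x₁₂ F₂₃ = F₂₃ x₁₃`. -/
theorem assoc_tmul_one_mul_one_tmul (hF : ∀ u : A, (u ⊗ₜ 1) * F = F * (1 ⊗ₜ u))
    (x : A ⊗[R] A) :
    Algebra.TensorProduct.assoc R R R A A A (x ⊗ₜ 1) * (1 ⊗ₜ F) =
      (1 ⊗ₜ F) * Algebra.TensorProduct.map (AlgHom.id R A) Algebra.TensorProduct.includeRight x := by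
  induction x using TensorProduct.induction_on with
  | zero => simp
  | tmul a b => simp [hF b]
  | add x y hx hy => simp only [map_add, add_tmul, add_mul, mul_add, hx, hy]

theorem mulOneTmul_coassoc (hF : ∀ u : A, (u ⊗ₜ 1) * F = F * (1 ⊗ₜ u)) (u : A) :
    TensorProduct.assoc R A A A (map (mulOneTmul F) LinearMap.id (mulOneTmul F u)) =
      map LinearMap.id (mulOneTmul F) (mulOneTmul F u) := by
  change Algebra.TensorProduct.assoc R R R A A A _ = _
  rw [map_mulOneTmul_id, map_id_mulOneTmul, mulOneTmul_apply, map_mul, map_mul, map_mul,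
    map_mul, assoc_map_includeRight_id, assoc_map_includeRight_id, ← mul_assoc,
    assoc_tmul_one_mul_one_tmul hF, mul_assoc]
  rfl

end Coproduct

section AntiMultiplicative

variable {R B C : Type*} [CommSemiring R] [Semiring B] [Algebra R B] [Semiring C] [Algebra R C]
  (S : C →ₗ[R] B)

theorem map_id_tmul_one_mul (b : B) (x : B ⊗[R] C) :
    map LinearMap.id S ((b ⊗ₜ 1) * x) = (b ⊗ₜ 1) * map LinearMap.id S x := by
  induction x using TensorProduct.induction_on with
  | zero => simp
  | tmul a c => simp
  | add x y hx hy => simp only [mul_add, map_add, hx, hy]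

variable {S}

theorem map_id_one_tmul_mul (hS : ∀ c c' : C, S (c * c') = S c' * S c) (c : C) (x : B ⊗[R] C) :
    map LinearMap.id S ((1 ⊗ₜ c) * x) = map LinearMap.id S x * (1 ⊗ₜ S c) := by
  induction x using TensorProduct.induction_on with
  | zero => simp
  | tmul a c' => simp [hS]
  | add x y hx hy => simp only [mul_add, add_mul, map_add, hx, hy]

theorem tmul_one_mul_map_id_of_one_tmul_mul (hS : ∀ c c' : C, S (c * c') = S c' * S c)
    (hS_surj : Function.Surjective S) {E : B ⊗[R] C}
    (hE : ∀ c : C, (1 ⊗ₜ c) * E = (S c ⊗ₜ 1) * E) (u : B) :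
    (u ⊗ₜ 1) * map LinearMap.id S E = map LinearMap.id S E * (1 ⊗ₜ u) := by
  obtain ⟨c, rfl⟩ := hS_surj u
  rw [← map_id_tmul_one_mul, ← hE, map_id_one_tmul_mul hS]

end AntiMultiplicative

end TensorProduct

theorem deltaB_coassoc_general
    {B C : Type*} [Ring B] [Algebra ℂ B] [Ring C] [Algebra ℂ C]
    (SC : C →ₗ[ℂ] B)
    (hSCanti : ∀ a b : C, SC (a * b) = SC b * SC a)
    (hSCbij : Function.Bijective SC)
    (E : B ⊗[ℂ] C)
    (hE2 : ∀ c : C, ((1 : B) ⊗ₜ[ℂ] c) * E = (SC c ⊗ₜ[ℂ] (1 : C)) * E) :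
    ∀ u : B,
      TensorProduct.assoc ℂ B B B
          (TensorProduct.map (deltaB SC E) LinearMap.id (deltaB SC E u))
        = TensorProduct.map LinearMap.id (deltaB SC E) (deltaB SC E u) :=
  mulOneTmul_coassoc (tmul_one_mul_map_id_of_one_tmul_mul hSCanti hSCbij.2 hE2)

/-- The coproduct `Δ_B(u) = F₁(1 ⊗ u)` is coassociative. -/
theorem deltaB_coassoc
    {B C : Type*} [Ring B] [Algebra ℂ B] [Ring C] [Algebra ℂ C]
    [FiniteDimensional ℂ B] [FiniteDimensional ℂ C]
    (SB : B →ₗ[ℂ] C) (SC : C →ₗ[ℂ] B)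
    (hSBanti : ∀ a b : B, SB (a * b) = SB b * SB a)
    (hSCanti : ∀ a b : C, SC (a * b) = SC b * SC a)
    (hSBbij : Function.Bijective SB) (hSCbij : Function.Bijective SC)
    (E : B ⊗[ℂ] C)
    (hEidem : E * E = E)
    (hE1 : ∀ b : B, E * (b ⊗ₜ[ℂ] (1 : C)) = E * ((1 : B) ⊗ₜ[ℂ] SB b))
    (hE2 : ∀ c : C, ((1 : B) ⊗ₜ[ℂ] c) * E = (SC c ⊗ₜ[ℂ] (1 : C)) * E)
    (φB : B →ₗ[ℂ] ℂ) (φC : C →ₗ[ℂ] ℂ)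
    (hφB : lTens φB E = 1) (hφC : rTens φC E = 1)
    (hreg : TensorProduct.map SB SC E = TensorProduct.comm ℂ B C E) :
    ∀ u : B,
      TensorProduct.assoc ℂ B B B
          (TensorProduct.map (deltaB SC E) LinearMap.id (deltaB SC E u))
        = TensorProduct.map LinearMap.id (deltaB SC E) (deltaB SC E u) :=
  deltaB_coassoc_general SC hSCanti hSCbij E hE2
end

section
/- Let B, C be finite-dimensional ℂ-algebras with a regular separability idempotent E (anti-isomorphisms S_B, S_C, functionals φ_B, φ_C with (φ_B⊗id)E=1, (id⊗φ_C)E=1). Define the pairing ⟨c, u⟩₁ = φ_C(S_B(u)c) for c ∈ C, u ∈ B, and Δ_B(u) = F₁(1 ⊗ u) with F₁ = (id⊗S_C)(E). Then ⟨cc', u⟩₁ = ⟨c ⊗ c', Δ_B(u)⟩₁ for all c, c' ∈ C and u ∈ B, where the right side means Σ ⟨c, u₍₁₎⟩₁⟨c', u₍₂₎⟩₁ for Δ_B(u) = Σ u₍₁₎ ⊗ u₍₂₎. -/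
/-! Write `E = Σ eᵢ ⊗ fᵢ`. Unfolding `Δ_B`, the right-hand side is
`Σ φ_C(S_B(eᵢ) c) φ_C(S_B(u) S_B(S_C fᵢ) c')`, and regularity `(S_B ⊗ S_C)(E) = flip E` turns it
into `φ_C(S_B(u) S_B(Σ φ_C(fᵢ c) eᵢ) c')`. Writing `c = S_B b`, the relation
`E (1 ⊗ S_B b) = E (b ⊗ 1)` and `(id ⊗ φ_C)(E) = 1` give `Σ φ_C(fᵢ c) eᵢ = b`, whence the claim. -/

open TensorProduct

/-- The functional `u ↦ ⟨c, u⟩₁ = φ_C(S_B(u) c)` on `B`. -/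
noncomputable def pairC {B C : Type*} [Ring B] [Algebra ℂ B] [Ring C] [Algebra ℂ C]
    (SB : B →ₗ[ℂ] C) (φC : C →ₗ[ℂ] ℂ) (c : C) : B →ₗ[ℂ] ℂ :=
  φC ∘ₗ (LinearMap.mulRight ℂ c) ∘ₗ SB

theorem TensorProduct.map_mul_one_tmul {R A B M N : Type*} [CommSemiring R]
    [Semiring A] [Algebra R A] [Semiring B] [Algebra R B]
    [AddCommMonoid M] [Module R M] [AddCommMonoid N] [Module R N]
    (f : A →ₗ[R] M) (g : B →ₗ[R] N) (X : A ⊗[R] B) (u : B) :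
    map f g (X * (1 ⊗ₜ u)) = map f (g ∘ₗ LinearMap.mulRight R u) X := by
  induction X using TensorProduct.induction_on with
  | zero => simp
  | tmul a b => simp [Algebra.TensorProduct.tmul_mul_tmul]
  | add X Y hX hY => simp [add_mul, hX, hY]

section SlicesOverComplex

variable {B C : Type*} [Ring B] [Algebra ℂ B] [Ring C] [Algebra ℂ C]

theorem rTens_mul_tmul_one (g : C →ₗ[ℂ] ℂ) (X : B ⊗[ℂ] C) (b : B) :
    rTens g (X * (b ⊗ₜ 1)) = rTens g X * b := by
  induction X using TensorProduct.induction_on with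
  | zero => simp
  | tmul x y => simp [rTens, Algebra.TensorProduct.tmul_mul_tmul]
  | add X Y hX hY => simp [add_mul, hX, hY]

theorem rTens_mul_one_tmul (g : C →ₗ[ℂ] ℂ) (X : B ⊗[ℂ] C) (c : C) :
    rTens g (X * (1 ⊗ₜ c)) = rTens (g ∘ₗ LinearMap.mulRight ℂ c) X := by
  induction X using TensorProduct.induction_on with
  | zero => simp
  | tmul x y => simp [rTens, Algebra.TensorProduct.tmul_mul_tmul]
  | add X Y hX hY => simp [add_mul, hX, hY]

theorem lid_map_comm (f : C →ₗ[ℂ] ℂ) (g : B →ₗ[ℂ] ℂ) (X : B ⊗[ℂ] C) :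
    TensorProduct.lid ℂ ℂ (map f g (TensorProduct.comm ℂ B C X)) = g (rTens f X) := by
  induction X using TensorProduct.induction_on with
  | zero => simp
  | tmul x y => simp [rTens, mul_comm]
  | add X Y hX hY => simp [hX, hY]

theorem pairC_mul (SB : B →ₗ[ℂ] C) (hSBanti : ∀ a b : B, SB (a * b) = SB b * SB a)
    (φC : C →ₗ[ℂ] ℂ) (c : C) (a u : B) :
    pairC SB φC c (a * u) = φC (SB u * SB a * c) := by
  simp [pairC, hSBanti]

theorem map_rTens_mul_one_tmul (SB : B →ₗ[ℂ] C) (hSBsurj : Function.Surjective SB)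
    (E : B ⊗[ℂ] C) (hE1 : ∀ b : B, E * (b ⊗ₜ[ℂ] (1 : C)) = E * ((1 : B) ⊗ₜ[ℂ] SB b))
    (φC : C →ₗ[ℂ] ℂ) (hφC : rTens φC E = 1) (c : C) :
    SB (rTens φC (E * (1 ⊗ₜ c))) = c := by
  obtain ⟨b, rfl⟩ := hSBsurj c
  rw [← hE1, rTens_mul_tmul_one, hφC, one_mul]

end SlicesOverComplex

theorem pairing_dual_to_product_general
    {B C : Type*} [Ring B] [Algebra ℂ B] [Ring C] [Algebra ℂ C]
    (SB : B →ₗ[ℂ] C) (SC : C →ₗ[ℂ] B)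
    (hSBanti : ∀ a b : B, SB (a * b) = SB b * SB a)
    (hSBbij : Function.Bijective SB)
    (E : B ⊗[ℂ] C)
    (hE1 : ∀ b : B, E * (b ⊗ₜ[ℂ] (1 : C)) = E * ((1 : B) ⊗ₜ[ℂ] SB b))
    (φC : C →ₗ[ℂ] ℂ)
    (hφC : rTens φC E = 1)
    (hreg : TensorProduct.map SB SC E = TensorProduct.comm ℂ B C E) :
    ∀ (c c' : C) (u : B),
      φC (SB u * (c * c'))
        = TensorProduct.lid ℂ ℂ
            (TensorProduct.map (pairC SB φC c) (pairC SB φC c') (deltaB SC E u)) := by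
  intro c c' u
  set h : C →ₗ[ℂ] ℂ := φC ∘ₗ LinearMap.mulRight ℂ c' ∘ₗ LinearMap.mulLeft ℂ (SB u)
  have hpair : pairC SB φC c' ∘ₗ LinearMap.mulRight ℂ u = h ∘ₗ SB := by
    ext a
    simp [h, pairC_mul SB hSBanti, mul_assoc]
  calc φC (SB u * (c * c'))
      = h (SB (rTens (φC ∘ₗ LinearMap.mulRight ℂ c) E)) := by
        rw [← rTens_mul_one_tmul, map_rTens_mul_one_tmul SB hSBbij.2 E hE1 φC hφC]
        simp [h, mul_assoc]
    _ = TensorProduct.lid ℂ ℂ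
          (map (φC ∘ₗ LinearMap.mulRight ℂ c) (h ∘ₗ SB) (map SB SC E)) := by
        rw [hreg, lid_map_comm]
        rfl
    _ = TensorProduct.lid ℂ ℂ (map (pairC SB φC c) (pairC SB φC c' ∘ₗ LinearMap.mulRight ℂ u)
          (map LinearMap.id SC E)) := by
        rw [hpair, ← LinearMap.comp_apply (map (pairC SB φC c) _), ← map_comp, LinearMap.comp_id,
          ← LinearMap.comp_apply (map (φC ∘ₗ _) _), ← map_comp]
        rfl
    _ = _ := by
        rw [← map_mul_one_tmul]
        rfl

/-- The pairing `⟨c, u⟩₁ = φ_C(S_B(u) c)` turns `Δ_B` into the dual of the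
product of `C`: `⟨c c', u⟩₁ = ⟨c ⊗ c', Δ_B(u)⟩₁`. -/
theorem pairing_dual_to_product
    {B C : Type*} [Ring B] [Algebra ℂ B] [Ring C] [Algebra ℂ C]
    [FiniteDimensional ℂ B] [FiniteDimensional ℂ C]
    (SB : B →ₗ[ℂ] C) (SC : C →ₗ[ℂ] B)
    (hSBanti : ∀ a b : B, SB (a * b) = SB b * SB a)
    (hSCanti : ∀ a b : C, SC (a * b) = SC b * SC a)
    (hSBbij : Function.Bijective SB) (hSCbij : Function.Bijective SC)
    (E : B ⊗[ℂ] C)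
    (hEidem : E * E = E)
    (hE1 : ∀ b : B, E * (b ⊗ₜ[ℂ] (1 : C)) = E * ((1 : B) ⊗ₜ[ℂ] SB b))
    (hE2 : ∀ c : C, ((1 : B) ⊗ₜ[ℂ] c) * E = (SC c ⊗ₜ[ℂ] (1 : C)) * E)
    (φB : B →ₗ[ℂ] ℂ) (φC : C →ₗ[ℂ] ℂ)
    (hφB : lTens φB E = 1) (hφC : rTens φC E = 1)
    (hreg : TensorProduct.map SB SC E = TensorProduct.comm ℂ B C E) :
    ∀ (c c' : C) (u : B),
      φC (SB u * (c * c'))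
        = TensorProduct.lid ℂ ℂ
            (TensorProduct.map (pairC SB φC c) (pairC SB φC c') (deltaB SC E u)) :=
  pairing_dual_to_product_general SB SC hSBanti hSBbij E hE1 φC hφC hreg
end

section
/- Let B, C be finite-dimensional ℂ-algebras with a regular separability idempotent E ∈ B ⊗ C, and let Â = B ⊗ C carry the product (u ⊗ v)(u' ⊗ v') = ε(v,u')(u ⊗ v') with ε(v,u) = φ_B(S_C(v)u). Define ψ : Â → ℂ by ψ(u ⊗ v) = φ_C(S_B(u)v). If φ_C and ε are faithful (nondegenerate), then ψ is a faithful functional on Â: ψ(ab) = 0 for all b implies a = 0, and ψ(ba) = 0 for all b implies a = 0. -/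
/-!
Up to swapping the tensor factors of `a`, the pairing `(a, b) ↦ ψ (a b)` on `B ⊗ C` is the
tensor product of the pairings `ε (v, u') = φ_B (S_C v * u')` and `(u, v') ↦ φ_C (S_B u * v')`,
both nondegenerate. In finite dimension a tensor product of left-separating pairings is
left-separating: it is the injective map `f ⊗ g` into `N₁^* ⊗ N₂^*` followed by the isomorphism
`N₁^* ⊗ N₂^* ≃ (N₁ ⊗ N₂)^*`; right-separation follows by flipping.
-/

open TensorProduct

namespace LinearMap

variable {K M₁ M₂ N₁ N₂ : Type*} [Field K]
  [AddCommGroup M₁] [Module K M₁] [AddCommGroup M₂] [Module K M₂]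
  [AddCommGroup N₁] [Module K N₁] [AddCommGroup N₂] [Module K N₂]
  (f : M₁ →ₗ[K] N₁ →ₗ[K] K) (g : M₂ →ₗ[K] N₂ →ₗ[K] K)

noncomputable def tensorPairing : M₁ ⊗[K] M₂ →ₗ[K] N₁ ⊗[K] N₂ →ₗ[K] K :=
  dualDistrib K N₁ N₂ ∘ₗ TensorProduct.map f g

@[simp]
theorem tensorPairing_tmul (m₁ : M₁) (m₂ : M₂) (n₁ : N₁) (n₂ : N₂) :
    tensorPairing f g (m₁ ⊗ₜ m₂) (n₁ ⊗ₜ n₂) = f m₁ n₁ * g m₂ n₂ :=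
  rfl

theorem tensorPairing_flip : (tensorPairing f g).flip = tensorPairing f.flip g.flip :=
  TensorProduct.ext' fun _ _ ↦ TensorProduct.ext' fun _ _ ↦ rfl

variable {f g}

theorem SeparatingLeft.tensorPairing [FiniteDimensional K N₁] [FiniteDimensional K N₂]
    (hf : f.SeparatingLeft) (hg : g.SeparatingLeft) : (tensorPairing f g).SeparatingLeft := by
  rw [separatingLeft_iff_ker_eq_bot, ker_eq_bot] at *
  exact (dualDistribEquiv K N₁ N₂).injective.comp (map_injective_of_flat_flat f g hf hg)

theorem SeparatingRight.tensorPairing [FiniteDimensional K M₁] [FiniteDimensional K M₂]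
    (hf : f.SeparatingRight) (hg : g.SeparatingRight) : (tensorPairing f g).SeparatingRight := by
  rw [← flip_separatingLeft, tensorPairing_flip]
  exact (flip_separatingLeft.mpr hf).tensorPairing (flip_separatingLeft.mpr hg)

theorem Nondegenerate.tensorPairing [FiniteDimensional K M₁] [FiniteDimensional K M₂]
    [FiniteDimensional K N₁] [FiniteDimensional K N₂]
    (hf : f.Nondegenerate) (hg : g.Nondegenerate) : (tensorPairing f g).Nondegenerate :=
  ⟨hf.1.tensorPairing hg.1, hf.2.tensorPairing hg.2⟩

end LinearMap

theorem dual_right_integral_faithful_general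
    {B C : Type*} [Ring B] [Algebra ℂ B] [Ring C] [Algebra ℂ C]
    [FiniteDimensional ℂ B] [FiniteDimensional ℂ C]
    (SB : B ≃ₗ[ℂ] C) (SC : C ≃ₗ[ℂ] B)
    (φB : B →ₗ[ℂ] ℂ) (φC : C →ₗ[ℂ] ℂ)
    (hφCfaith_l : ∀ c : C, (∀ c' : C, φC (c * c') = 0) → c = 0)
    (hφCfaith_r : ∀ c : C, (∀ c' : C, φC (c' * c) = 0) → c = 0)
    (hεnd_l : ∀ v : C, (∀ u : B, φB (SC v * u) = 0) → v = 0)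
    (hεnd_r : ∀ u : B, (∀ v : C, φB (SC v * u) = 0) → u = 0)
    (m : B ⊗[ℂ] C →ₗ[ℂ] B ⊗[ℂ] C →ₗ[ℂ] B ⊗[ℂ] C)
    (hm : ∀ (u u' : B) (v v' : C),
      m (u ⊗ₜ[ℂ] v) (u' ⊗ₜ[ℂ] v') = φB (SC v * u') • (u ⊗ₜ[ℂ] v'))
    (ψ : B ⊗[ℂ] C →ₗ[ℂ] ℂ)
    (hψ : ∀ (u : B) (v : C), ψ (u ⊗ₜ[ℂ] v) = φC (SB u * v)) :
    (∀ a : B ⊗[ℂ] C, (∀ b : B ⊗[ℂ] C, ψ (m a b) = 0) → a = 0) ∧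
    (∀ a : B ⊗[ℂ] C, (∀ b : B ⊗[ℂ] C, ψ (m b a) = 0) → a = 0) := by
  let ε : C →ₗ[ℂ] B →ₗ[ℂ] ℂ := (LinearMap.mul ℂ B).compr₂ φB ∘ₗ SC.toLinearMap
  let γ : B →ₗ[ℂ] C →ₗ[ℂ] ℂ := (LinearMap.mul ℂ C).compr₂ φC ∘ₗ SB.toLinearMap
  have hε : ε.Nondegenerate := ⟨hεnd_l, hεnd_r⟩
  have hγ : γ.Nondegenerate :=
    ⟨fun u hu ↦ SB.map_eq_zero_iff.mp (hφCfaith_l _ hu),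
      fun v hv ↦ hφCfaith_r v fun c ↦ by simpa [γ] using hv (SB.symm c)⟩
  have hψm : ∀ a b, ψ (m a b) = LinearMap.tensorPairing ε γ (TensorProduct.comm ℂ B C a) b := by
    suffices m.compr₂ ψ = LinearMap.tensorPairing ε γ ∘ₗ (TensorProduct.comm ℂ B C).toLinearMap from
      fun a b ↦ LinearMap.congr_fun₂ this a b
    refine TensorProduct.ext' fun u v ↦ TensorProduct.ext' fun u' v' ↦ ?_
    simp [ε, γ, hm, hψ]
  constructor
  · intro a ha
    exact (TensorProduct.comm ℂ B C).map_eq_zero_iff.mp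
      ((hε.tensorPairing hγ).1 _ fun b ↦ (hψm a b).symm.trans (ha b))
  · intro a ha
    refine (hε.tensorPairing hγ).2 a fun x ↦ ?_
    simpa [hψm] using ha ((TensorProduct.comm ℂ B C).symm x)

/-- On the dual algebra `Â = B ⊗ C` with product
`(u ⊗ v)(u' ⊗ v') = ε(v,u')(u ⊗ v')`, the functional `ψ(u ⊗ v) = φ_C(S_B(u)v)` is
faithful, provided `φ_C` and `ε` are faithful. -/
theorem dual_right_integral_faithful
    {B C : Type*} [Ring B] [Algebra ℂ B] [Ring C] [Algebra ℂ C]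
    [FiniteDimensional ℂ B] [FiniteDimensional ℂ C]
    (SB : B ≃ₗ[ℂ] C) (SC : C ≃ₗ[ℂ] B)
    (hSBanti : ∀ a b : B, SB (a * b) = SB b * SB a)
    (hSCanti : ∀ a b : C, SC (a * b) = SC b * SC a)
    (E : B ⊗[ℂ] C)
    (hEidem : E * E = E)
    (hE1 : ∀ b : B, E * (b ⊗ₜ[ℂ] (1 : C)) = E * ((1 : B) ⊗ₜ[ℂ] SB b))
    (hE2 : ∀ c : C, ((1 : B) ⊗ₜ[ℂ] c) * E = (SC c ⊗ₜ[ℂ] (1 : C)) * E)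
    (φB : B →ₗ[ℂ] ℂ) (φC : C →ₗ[ℂ] ℂ)
    (hφBC : ∀ b : B, φB b = φC (SB b))
    (hφCB : ∀ c : C, φC c = φB (SC c))
    (hφCfaith_l : ∀ c : C, (∀ c' : C, φC (c * c') = 0) → c = 0)
    (hφCfaith_r : ∀ c : C, (∀ c' : C, φC (c' * c) = 0) → c = 0)
    (hεnd_l : ∀ v : C, (∀ u : B, φB (SC v * u) = 0) → v = 0)
    (hεnd_r : ∀ u : B, (∀ v : C, φB (SC v * u) = 0) → u = 0)
    (m : B ⊗[ℂ] C →ₗ[ℂ] B ⊗[ℂ] C →ₗ[ℂ] B ⊗[ℂ] C)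
    (hm : ∀ (u u' : B) (v v' : C),
      m (u ⊗ₜ[ℂ] v) (u' ⊗ₜ[ℂ] v') = φB (SC v * u') • (u ⊗ₜ[ℂ] v'))
    (ψ : B ⊗[ℂ] C →ₗ[ℂ] ℂ)
    (hψ : ∀ (u : B) (v : C), ψ (u ⊗ₜ[ℂ] v) = φC (SB u * v)) :
    (∀ a : B ⊗[ℂ] C, (∀ b : B ⊗[ℂ] C, ψ (m a b) = 0) → a = 0) ∧
    (∀ a : B ⊗[ℂ] C, (∀ b : B ⊗[ℂ] C, ψ (m b a) = 0) → a = 0) :=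
  dual_right_integral_faithful_general SB SC φB φC hφCfaith_l hφCfaith_r hεnd_l hεnd_r m hm ψ hψ
end

section
/- In the setting of the previous statement (Â = B ⊗ C with product (u⊗v)(u'⊗v') = ε(v,u')(u⊗v') and ψ(u⊗v) = φ_C(S_B(u)v)), the functional ψ satisfies the KMS-type identity ψ(ab) = ψ(b σ'(a)) for all a, b ∈ Â, where σ'(u ⊗ v) = σ_B⁻¹(u) ⊗ σ_C(v) with σ_B = (S_C S_B)⁻¹ and σ_C = S_B S_C. -/
open TensorProduct

/-!
Both sides are bilinear in `(a, b)`, so it suffices to take `a = u ⊗ v`, `b = u' ⊗ v'`. Then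
`ψ(ab) = φ_B(S_C(v) u') · φ_C(S_B(u) v')`, and in `ψ(b σ'(a))` each factor reappears after
the antipode is pulled out of a product: `S_B(u') S_B(S_C v) = S_B(S_C(v) u')` and
`S_C(v') S_C(S_B u) = S_C(S_B(u) v')`, which `φ_C ∘ S_B = φ_B` and `φ_B ∘ S_C = φ_C` evaluate.
-/

theorem apply_map_mul_map_of_antimultiplicative {A A' R : Type*} [Mul A] [Mul A']
    (S : A → A') (hS : ∀ a b, S (a * b) = S b * S a)
    (φ : A → R) (φ' : A' → R) (hφ : ∀ a, φ a = φ' (S a)) (a b : A) :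
    φ' (S a * S b) = φ (b * a) := by
  rw [← hS, hφ]

theorem dual_right_integral_kms_general
    {B C : Type*} [Ring B] [Algebra ℂ B] [Ring C] [Algebra ℂ C]
    (SB : B ≃ₗ[ℂ] C) (SC : C ≃ₗ[ℂ] B)
    (hSBanti : ∀ a b : B, SB (a * b) = SB b * SB a)
    (hSCanti : ∀ a b : C, SC (a * b) = SC b * SC a)
    (φB : B →ₗ[ℂ] ℂ) (φC : C →ₗ[ℂ] ℂ)
    (hφBC : ∀ b : B, φB b = φC (SB b))
    (hφCB : ∀ c : C, φC c = φB (SC c))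
    (m : B ⊗[ℂ] C →ₗ[ℂ] B ⊗[ℂ] C →ₗ[ℂ] B ⊗[ℂ] C)
    (hm : ∀ (u u' : B) (v v' : C),
      m (u ⊗ₜ[ℂ] v) (u' ⊗ₜ[ℂ] v') = φB (SC v * u') • (u ⊗ₜ[ℂ] v'))
    (ψ : B ⊗[ℂ] C →ₗ[ℂ] ℂ)
    (hψ : ∀ (u : B) (v : C), ψ (u ⊗ₜ[ℂ] v) = φC (SB u * v))
    (σ' : B ⊗[ℂ] C →ₗ[ℂ] B ⊗[ℂ] C)
    (hσ' : ∀ (u : B) (v : C),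
      σ' (u ⊗ₜ[ℂ] v) = ((SB.trans SC) u) ⊗ₜ[ℂ] ((SC.trans SB) v)) :
    ∀ a b : B ⊗[ℂ] C, ψ (m a b) = ψ (m b (σ' a)) := by
  have hB := apply_map_mul_map_of_antimultiplicative SB hSBanti φB φC hφBC
  have hC := apply_map_mul_map_of_antimultiplicative SC hSCanti φC φB hφCB
  have hbilin : m.compr₂ ψ = (m.compr₂ ψ).flip ∘ₗ σ' :=
    TensorProduct.ext' fun u v => TensorProduct.ext' fun u' v' => by
      simp only [LinearMap.compr₂_apply, LinearMap.comp_apply, LinearMap.flip_apply, hσ', hm,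
        map_smul, hψ, LinearEquiv.trans_apply, hB, hC, smul_eq_mul, mul_comm]
  exact fun a b => LinearMap.congr_fun₂ hbilin a b

/-- The functional `ψ(u ⊗ v) = φ_C(S_B(u)v)` on the dual algebra
`Â = B ⊗ C` satisfies the KMS identity `ψ(ab) = ψ(b σ'(a))` with
`σ'(u ⊗ v) = σ_B⁻¹(u) ⊗ σ_C(v)`, where `σ_B = (S_C S_B)⁻¹` and `σ_C = S_B S_C`. -/
theorem dual_right_integral_kms
    {B C : Type*} [Ring B] [Algebra ℂ B] [Ring C] [Algebra ℂ C]
    [FiniteDimensional ℂ B] [FiniteDimensional ℂ C]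
    (SB : B ≃ₗ[ℂ] C) (SC : C ≃ₗ[ℂ] B)
    (hSBanti : ∀ a b : B, SB (a * b) = SB b * SB a)
    (hSCanti : ∀ a b : C, SC (a * b) = SC b * SC a)
    (E : B ⊗[ℂ] C)
    (hEidem : E * E = E)
    (hE1 : ∀ b : B, E * (b ⊗ₜ[ℂ] (1 : C)) = E * ((1 : B) ⊗ₜ[ℂ] SB b))
    (hE2 : ∀ c : C, ((1 : B) ⊗ₜ[ℂ] c) * E = (SC c ⊗ₜ[ℂ] (1 : C)) * E)
    (φB : B →ₗ[ℂ] ℂ) (φC : C →ₗ[ℂ] ℂ)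
    (hφBC : ∀ b : B, φB b = φC (SB b))
    (hφCB : ∀ c : C, φC c = φB (SC c))
    -- KMS properties of the distinguished functionals
    (hKMSB : ∀ b b' : B, φB (b * b') = φB (b' * (SB.trans SC).symm b))
    (hKMSC : ∀ c c' : C, φC (c * c') = φC (c' * (SC.trans SB) c))
    (m : B ⊗[ℂ] C →ₗ[ℂ] B ⊗[ℂ] C →ₗ[ℂ] B ⊗[ℂ] C)
    (hm : ∀ (u u' : B) (v v' : C),
      m (u ⊗ₜ[ℂ] v) (u' ⊗ₜ[ℂ] v') = φB (SC v * u') • (u ⊗ₜ[ℂ] v'))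
    (ψ : B ⊗[ℂ] C →ₗ[ℂ] ℂ)
    (hψ : ∀ (u : B) (v : C), ψ (u ⊗ₜ[ℂ] v) = φC (SB u * v))
    (σ' : B ⊗[ℂ] C →ₗ[ℂ] B ⊗[ℂ] C)
    (hσ' : ∀ (u : B) (v : C),
      σ' (u ⊗ₜ[ℂ] v) = ((SB.trans SC) u) ⊗ₜ[ℂ] ((SC.trans SB) v)) :
    ∀ a b : B ⊗[ℂ] C, ψ (m a b) = ψ (m b (σ' a)) :=
  dual_right_integral_kms_general SB SC hSBanti hSCanti φB φC hφBC hφCB m hm ψ hψ σ' hσ'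
end
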